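/- Let β ∈ Φ⁺ and suppose β = γ_1 + ⋯ + γ_s with all γ_t ∈ Φ⁺. Then min{γ_1, …, γ_s} ⪯ β ⪯ max{γ_1, …, γ_s}, where min and max are taken with respect to the convex order ⪯. -/

import Mathlib

open scoped BigOperators

namespace KLR

/-- A Cartan datum of finite type: a finite index set `I`, a Cartan matrix `c` of finite type
(encoded by positive definiteness of the symmetrized matrix), symmetrizers `d`, and a choice
of signs `eps` with `eps i j * eps j i = -1` whenever `c i j < 0`. -/
structure CartanDatum (I : Type) [Fintype I] [DecidableEq I] where
  c : I → I → ℤ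
  d : I → ℤ
  eps : I → I → ℤ
  c_diag : ∀ i, c i i = 2
  c_offdiag : ∀ i j, i ≠ j → c i j ≤ 0
  c_zero_iff : ∀ i j, c i j = 0 → c j i = 0
  d_pos : ∀ i, 0 < d i
  symm : ∀ i j, d i * c i j = d j * c j i
  finiteType : ∀ v : I → ℚ, v ≠ 0 → 0 < ∑ i, ∑ j, v i * ((d i * c i j : ℤ) : ℚ) * v j
  eps_sign : ∀ i j, c i j < 0 → eps i j = 1 ∨ eps i j = -1
  eps_skew : ∀ i j, c i j < 0 → eps i j * eps j i = -1

end KLR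
namespace KLR

variable {I : Type} [Fintype I] [DecidableEq I]

/-- The simple root `α_i`, as an integer vector in the root lattice. -/
def simple (i : I) : I → ℤ := fun j => if j = i then 1 else 0

/-- The simple reflection `s_i` acting on the root lattice:
`s_i(v) = v - (Σ_t c_{i,t} v_t) α_i`. -/
def srefl (D : CartanDatum I) (i : I) (v : I → ℤ) : I → ℤ :=
  fun j => v j - (if j = i then ∑ t, D.c i t * v t else 0)

/-- `v` is a root of the (finite type) root system with Cartan matrix `C`:
it lies in the Weyl group orbit of a simple root. -/
def IsRoot (D : CartanDatum I) (v : I → ℤ) : Prop :=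
  ∃ (L : List I) (i : I), v = L.foldr (srefl D) (simple i)

/-- `v` is a positive root: a root all of whose coordinates are nonnegative. -/
def IsPosRoot (D : CartanDatum I) (v : I → ℤ) : Prop :=
  IsRoot D v ∧ ∀ j, 0 ≤ v j

/-- `le` is a convex order on the set `Φ⁺` of positive roots: a total order such that
whenever `γ`, `β` and `γ + β` are all positive roots, `γ ⪯ β` implies
`γ ⪯ γ + β ⪯ β`. -/
structure IsConvexOrder (D : CartanDatum I) (le : (I → ℤ) → (I → ℤ) → Prop) : Prop where
  refl : ∀ v, IsPosRoot D v → le v v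
  trans : ∀ u v w, IsPosRoot D u → IsPosRoot D v → IsPosRoot D w →
      le u v → le v w → le u w
  antisymm : ∀ u v, IsPosRoot D u → IsPosRoot D v → le u v → le v u → u = v
  total : ∀ u v, IsPosRoot D u → IsPosRoot D v → le u v ∨ le v u
  convex : ∀ γ β, IsPosRoot D γ → IsPosRoot D β → IsPosRoot D (γ + β) → le γ β →
      le γ (γ + β) ∧ le (γ + β) β

/-- `L` is a Kostant partition of `α`: a weakly decreasing (for the convex order `le`)
list of positive roots summing to `α`. -/
def IsKP (D : CartanDatum I) (le : (I → ℤ) → (I → ℤ) → Prop) (α : I → ℕ)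
    (L : List (I → ℤ)) : Prop :=
  (∀ v ∈ L, IsPosRoot D v) ∧ List.Pairwise (fun a b => le b a) L ∧
    L.sum = fun i => (α i : ℤ)

/-- `L` is lexicographically smaller than `M` for the strict order `lt`:
they agree up to position `t`, where the entry of `L` is `lt`-smaller. -/
def LexLt {V : Type} (lt : V → V → Prop) (L M : List V) : Prop :=
  ∃ (t : ℕ) (h1 : t < L.length) (h2 : t < M.length),
    L.take t = M.take t ∧ lt (L.get ⟨t, h1⟩) (M.get ⟨t, h2⟩)

/-- The strict bilexicographic order on Kostant partitions: `L < M` iff `L` is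
lexicographically smaller than `M` and the reversed list `L.reverse` is lexicographically
bigger than `M.reverse`. -/
def BilexLt {V : Type} (le : V → V → Prop) (L M : List V) : Prop :=
  LexLt (fun a b => le a b ∧ a ≠ b) L M ∧
    LexLt (fun a b => le b a ∧ a ≠ b) L.reverse M.reverse

end KLR

open KLR

/-!
For the invariant form, `(β, β) = Σ_t (γ_t, β) > 0`, so some `(γ_t, β)` is positive. Then either
`γ_t = β`, or `β - γ_t` is again a root, hence a positive root, being the sum of the remaining
`γ`'s. By induction on the number of summands `β - γ_t` lies between the smallest and the largest
of those, and convexity applied to `β = γ_t + (β - γ_t)` puts `β` between `γ_t` and `β - γ_t`.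
-/

namespace KLR

variable {I : Type} [Fintype I] [DecidableEq I]

namespace CartanDatum

variable (D : CartanDatum I)

def form : LinearMap.BilinForm ℤ (I → ℤ) :=
  Matrix.toLinearMap₂' ℤ (Matrix.of fun i j => D.d i * D.c i j)

def coroot (i : I) : (I → ℤ) →ₗ[ℤ] ℤ :=
  LinearMap.proj i ∘ₗ (Matrix.of D.c).mulVecLin

theorem coroot_apply (i : I) (v : I → ℤ) : D.coroot i v = ∑ t, D.c i t * v t := rfl

theorem form_apply (u v : I → ℤ) :
    D.form u v = ∑ i, ∑ j, u i * (D.d i * D.c i j) * v j := by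
  simp only [form, Matrix.toLinearMap₂'_apply, Matrix.of_apply, smul_eq_mul]
  exact Finset.sum_congr rfl fun _ _ => Finset.sum_congr rfl fun _ _ => by ring

theorem form_symm (u v : I → ℤ) : D.form u v = D.form v u := by
  rw [form_apply, form_apply, Finset.sum_comm]
  refine Finset.sum_congr rfl fun j _ => Finset.sum_congr rfl fun i _ => ?_
  rw [D.symm j i]
  ring

omit [Fintype I] in
theorem simple_eq_single (i : I) : simple i = Pi.single i 1 := by
  ext j
  simp [simple, Pi.single_apply]

theorem form_simple_left (i : I) (v : I → ℤ) :
    D.form (simple i) v = D.d i * D.coroot i v := by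
  rw [form, Matrix.toLinearMap₂'_apply', simple_eq_single, single_one_dotProduct, coroot_apply,
    Finset.mul_sum]
  simp only [Matrix.mulVec, dotProduct, Matrix.of_apply, mul_assoc]

theorem form_simple_right (i : I) (v : I → ℤ) :
    D.form v (simple i) = D.d i * D.coroot i v := by
  rw [form_symm, form_simple_left]

theorem form_self_pos {v : I → ℤ} (hv : v ≠ 0) : 0 < D.form v v := by
  have hq : (fun i => (v i : ℚ)) ≠ 0 := fun h =>
    hv (funext fun i => by simpa using congrFun h i)
  rw [form_apply]
  exact_mod_cast D.finiteType _ hq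

theorem coroot_simple (i : I) : D.coroot i (simple i) = 2 := by
  simp [coroot_apply, simple_eq_single, Pi.single_apply, D.c_diag]

theorem srefl_eq (i : I) (v : I → ℤ) : srefl D i v = v - D.coroot i v • simple i := by
  ext j
  by_cases h : j = i <;> simp [srefl, simple, coroot_apply, h]

theorem srefl_sub_smul (i : I) (u v : I → ℤ) (k : ℤ) :
    srefl D i (u - k • v) = srefl D i u - k • srefl D i v := by
  simp only [srefl_eq, map_sub, map_smul, smul_eq_mul]
  module

theorem srefl_srefl (i : I) (v : I → ℤ) : srefl D i (srefl D i v) = v := by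
  simp only [srefl_eq, map_sub, map_smul, smul_eq_mul, coroot_simple]
  module

theorem form_srefl (i : I) (u v : I → ℤ) :
    D.form (srefl D i u) (srefl D i v) = D.form u v := by
  simp only [srefl_eq, map_sub, map_smul, LinearMap.sub_apply, LinearMap.smul_apply, smul_eq_mul,
    form_simple_left, form_simple_right, coroot_simple]
  ring

end CartanDatum

variable {D : CartanDatum I}

theorem isRoot_srefl {v : I → ℤ} (hv : IsRoot D v) (i : I) : IsRoot D (srefl D i v) := by
  obtain ⟨L, j, rfl⟩ := hv
  exact ⟨i :: L, j, rfl⟩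

@[elab_as_elim]
theorem IsRoot.induction_on {P : ∀ v, IsRoot D v → Prop} {v : I → ℤ} (hv : IsRoot D v)
    (simple : ∀ i, P (simple i) ⟨[], i, rfl⟩)
    (srefl : ∀ i v (hv : IsRoot D v), P v hv → P (srefl D i v) (isRoot_srefl hv i)) :
    P v hv := by
  obtain ⟨L, i, rfl⟩ := hv
  induction L with
  | nil => exact simple i
  | cons j L ih => exact srefl j _ _ ih

theorem IsRoot.form_self_pos {v : I → ℤ} (hv : IsRoot D v) : 0 < D.form v v := by
  induction hv using IsRoot.induction_on with
  | simple i =>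
    rw [D.form_simple_left, D.coroot_simple]
    linarith [D.d_pos i]
  | srefl i v _ ih => rwa [D.form_srefl]

/-- `u - k • v` is the reflection `s_v u` of the root `u` in the root `v`. -/
theorem IsRoot.exists_sub_smul {v : I → ℤ} (hv : IsRoot D v) {u : I → ℤ} (hu : IsRoot D u) :
    ∃ k : ℤ, k * D.form v v = 2 * D.form v u ∧ IsRoot D (u - k • v) := by
  induction hv using IsRoot.induction_on generalizing u with
  | simple i =>
    refine ⟨D.coroot i u, ?_, ?_⟩
    · rw [D.form_simple_left, D.form_simple_left, D.coroot_simple]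
      ring
    · rw [← D.srefl_eq]
      exact isRoot_srefl hu i
  | srefl i v _ ih =>
    obtain ⟨k, hk, hroot⟩ := ih (isRoot_srefl hu i)
    refine ⟨k, ?_, ?_⟩
    · rw [D.form_srefl, hk, ← D.form_srefl i v, D.srefl_srefl]
    · have := isRoot_srefl hroot i
      rwa [D.srefl_sub_smul, D.srefl_srefl] at this

theorem IsRoot.neg {v : I → ℤ} (hv : IsRoot D v) : IsRoot D (-v) := by
  obtain ⟨k, hk, hroot⟩ := hv.exists_sub_smul hv
  have hk2 : k = 2 := by
    have := hv.form_self_pos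
    nlinarith
  rwa [hk2, two_smul, sub_add_cancel_left] at hroot

/-- If `(v, u) > 0` then `k = 2 (v, u) / (v, v)` and `q = 2 (u, v) / (u, u)` are positive integers,
and `k, q ≥ 2` would force `(u - v, u - v) ≤ 0`; so one of them is `1`. -/
theorem IsRoot.sub_of_form_pos {u v : I → ℤ} (hv : IsRoot D v) (hu : IsRoot D u)
    (hpos : 0 < D.form v u) (hne : v ≠ u) : IsRoot D (u - v) := by
  obtain ⟨k, hk, hkroot⟩ := hv.exists_sub_smul hu
  obtain ⟨q, hq, hqroot⟩ := hu.exists_sub_smul hv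
  have hvv := hv.form_self_pos
  have huu := hu.form_self_pos
  rw [D.form_symm u v] at hq
  by_cases hk1 : k = 1
  · rwa [hk1, one_smul] at hkroot
  by_cases hq1 : q = 1
  · rw [hq1, one_smul] at hqroot
    simpa using hqroot.neg
  have hk2 : 2 ≤ k := by
    have : 0 < k := by nlinarith
    omega
  have hq2 : 2 ≤ q := by
    have : 0 < q := by nlinarith
    omega
  have hdiff : D.form (u - v) (u - v) = D.form u u - 2 * D.form v u + D.form v v := by
    simp only [map_sub, LinearMap.sub_apply, D.form_symm u v]
    ring
  have := D.form_self_pos (sub_ne_zero.2 hne.symm)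
  nlinarith

theorem IsRoot.exists_eq_or_isPosRoot_sum_erase {ι : Type*} [DecidableEq ι] {S : Finset ι}
    {γ : ι → I → ℤ} {β : I → ℤ} (hβ : IsRoot D β) (hγ : ∀ t ∈ S, IsPosRoot D (γ t))
    (hsum : β = ∑ t ∈ S, γ t) :
    ∃ t ∈ S, γ t = β ∨ IsPosRoot D (∑ u ∈ S.erase t, γ u) := by
  have hform : 0 < ∑ t ∈ S, D.form (γ t) β := by
    rw [← LinearMap.BilinForm.sum_left, ← hsum]
    exact hβ.form_self_pos
  obtain ⟨t, ht, hpos⟩ := Finset.exists_lt_of_sum_lt (f := fun _ => (0 : ℤ)) (by simpa using hform)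
  refine ⟨t, ht, or_iff_not_imp_left.2 fun hne => ⟨?_, fun j => ?_⟩⟩
  · rw [← Finset.sum_erase_add S γ ht] at hsum
    rw [eq_sub_of_add_eq hsum.symm]
    exact (hγ t ht).1.sub_of_form_pos hβ hpos hne
  · rw [Finset.sum_apply]
    exact Finset.sum_nonneg fun u hu => (hγ u (Finset.mem_of_mem_erase hu)).2 j

variable {le : (I → ℤ) → (I → ℤ) → Prop}

theorem IsConvexOrder.between_of_add (hconv : IsConvexOrder D le) {γ δ : I → ℤ}
    (hγ : IsPosRoot D γ) (hδ : IsPosRoot D δ) (hγδ : IsPosRoot D (γ + δ)) :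
    (le γ (γ + δ) ∧ le (γ + δ) δ) ∨ (le δ (γ + δ) ∧ le (γ + δ) γ) := by
  rcases hconv.total γ δ hγ hδ with h | h
  · exact .inl (hconv.convex γ δ hγ hδ hγδ h)
  · rw [add_comm] at hγδ ⊢
    exact .inr (hconv.convex δ γ hδ hγ hγδ h)

theorem IsConvexOrder.exists_le_and_exists_ge_of_eq_sum (hconv : IsConvexOrder D le)
    {ι : Type*} [DecidableEq ι] (S : Finset ι) {γ : ι → I → ℤ} {β : I → ℤ}
    (hγ : ∀ t ∈ S, IsPosRoot D (γ t)) (hβ : IsPosRoot D β) (hsum : β = ∑ t ∈ S, γ t) :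
    (∃ t ∈ S, le (γ t) β) ∧ (∃ t ∈ S, le β (γ t)) := by
  induction S using Finset.strongInduction generalizing β with
  | H S ih =>
  obtain ⟨t, ht, heq | hδ⟩ := hβ.1.exists_eq_or_isPosRoot_sum_erase hγ hsum
  · subst heq
    exact ⟨⟨t, ht, hconv.refl _ hβ⟩, ⟨t, ht, hconv.refl _ hβ⟩⟩
  have hγ' : ∀ u ∈ S.erase t, IsPosRoot D (γ u) := fun u hu => hγ u (Finset.mem_of_mem_erase hu)
  obtain ⟨⟨t₁, ht₁, hle₁⟩, ⟨t₂, ht₂, hle₂⟩⟩ := ih _ (Finset.erase_ssubset ht) hγ' hδ rfl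
  have hmem : ∀ {u}, u ∈ S.erase t → u ∈ S := Finset.mem_of_mem_erase
  rw [hsum, ← Finset.add_sum_erase S γ ht] at hβ ⊢
  rcases hconv.between_of_add (hγ t ht) hδ hβ with ⟨hlo, hhi⟩ | ⟨hlo, hhi⟩
  · exact ⟨⟨t, ht, hlo⟩, ⟨t₂, hmem ht₂, hconv.trans _ _ _ hβ hδ (hγ' t₂ ht₂) hhi hle₂⟩⟩
  · exact ⟨⟨t₁, hmem ht₁, hconv.trans _ _ _ (hγ' t₁ ht₁) hδ hβ hle₁ hlo⟩, ⟨t, ht, hhi⟩⟩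

end KLR

theorem stmt_9_general {I : Type} [Fintype I] [DecidableEq I] (D : CartanDatum I)
    (le : (I → ℤ) → (I → ℤ) → Prop) (hconv : IsConvexOrder D le)
    (s : ℕ) (γ : Fin s → (I → ℤ)) (β : I → ℤ)
    (hγ : ∀ t, IsPosRoot D (γ t)) (hβ : IsPosRoot D β)
    (hsum : β = ∑ t, γ t) :
    (∃ t, le (γ t) β) ∧ (∃ t, le β (γ t)) := by
  simpa using hconv.exists_le_and_exists_ge_of_eq_sum Finset.univ (fun t _ => hγ t) hβ hsum

theorem stmt_9 {I : Type} [Fintype I] [DecidableEq I] (D : CartanDatum I)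
    (le : (I → ℤ) → (I → ℤ) → Prop) (hconv : IsConvexOrder D le)
    (s : ℕ) (hs : 0 < s) (γ : Fin s → (I → ℤ)) (β : I → ℤ)
    (hγ : ∀ t, IsPosRoot D (γ t)) (hβ : IsPosRoot D β)
    (hsum : β = ∑ t, γ t) :
    (∃ t, le (γ t) β) ∧ (∃ t, le β (γ t)) :=
  stmt_9_general D le hconv s γ β hγ hβ hsum
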